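/- arXiv:2111.10001 — 3 statements merged into one kernel-verified Lean document; each statement's English description precedes it below -/
import Mathlib

section
/- Let v(y) = 1 if y ≥ 0 and v(y) = 0 if y < 0. For every κ' > 0 and every nonzero real y, |v(y) - (1/(2πi)) ∫_{κ'-i}^{κ'+i} e^{ys}/s ds| ≤ e^{yκ'}/(π|y|). -/
open Complex Real

/-- `v y = 1` if `y ≥ 0` and `0` otherwise. -/
noncomputable def v (y : ℝ) : ℝ := if 0 ≤ y then 1 else 0

/-!
For `y < 0` the segment is moved to the right edge of the rectangle `[κ', σ] × [-1, 1]`, on which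
`e^{ys}/s` is holomorphic; for `y > 0` it is moved to the left edge of `[-σ, κ'] × [-1, 1]`, which
picks up the residue `2πi` at `0`. On the horizontal sides `|s| ≥ 1`, so each of them is at most
`∫ e^{yx} dx ≤ e^{yκ'}/|y|`, while the far vertical side is `O(1/σ)` and disappears as `σ → ∞`.
-/

open intervalIntegral Set Filter Topology
open scoped Interval

/-- The counterclockwise boundary integral over `[a, b] × [c, d]`, in the form of
`Complex.integral_boundary_rect_eq_zero_of_differentiableOn`. -/
noncomputable def rectBoundaryIntegral {E : Type*} [NormedAddCommGroup E] [NormedSpace ℂ E]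
    (f : ℂ → E) (a b c d : ℝ) : E :=
  (∫ x in a..b, f (x + c * I)) - (∫ x in a..b, f (x + d * I)) +
    I • (∫ t in c..d, f (b + t * I)) - I • ∫ t in c..d, f (a + t * I)

theorem rectBoundaryIntegral_eq_zero_of_differentiableOn {E : Type*} [NormedAddCommGroup E]
    [NormedSpace ℂ E] [CompleteSpace E] {f : ℂ → E} {a b c d : ℝ}
    (hf : DifferentiableOn ℂ f ([[a, b]] ×ℂ [[c, d]])) : rectBoundaryIntegral f a b c d = 0 :=
  integral_boundary_rect_eq_zero_of_differentiableOn f ⟨a, c⟩ ⟨b, d⟩ hf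

theorem integral_const_div_eq_log_sub {γ : ℝ → ℂ} {u : ℂ} {a b : ℝ}
    (hγ : ∀ x ∈ [[a, b]], HasDerivAt γ u x) (hslit : ∀ x ∈ [[a, b]], γ x ∈ slitPlane) :
    ∫ x in a..b, u / γ x = Complex.log (γ b) - Complex.log (γ a) := by
  refine integral_eq_sub_of_hasDerivAt (fun x hx => (hγ x hx).clog_real (hslit x hx)) ?_
  refine ContinuousOn.intervalIntegrable (continuousOn_const.div ?_ ?_)
  · exact fun x hx => (hγ x hx).continuousAt.continuousWithinAt
  · exact fun x hx => slitPlane_ne_zero (hslit x hx)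

theorem log_sub_log_neg_of_im_pos {u : ℂ} (hu : 0 < u.im) :
    Complex.log u - Complex.log (-u) = π * I := by
  rw [Complex.log, Complex.log, norm_neg, arg_neg_eq_arg_sub_pi_of_im_pos hu]
  push_cast
  ring

theorem integral_inv_horizontal {c : ℝ} (hc : c ≠ 0) (a b : ℝ) :
    ∫ x in a..b, ((x : ℂ) + c * I)⁻¹ = Complex.log (b + c * I) - Complex.log (a + c * I) := by
  simpa using integral_const_div_eq_log_sub (u := 1) (γ := fun x : ℝ => (x : ℂ) + c * I)
    (fun x _ => (ofRealCLM.hasDerivAt (x := x)).add_const _)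
    (fun x _ => mem_slitPlane_iff.2 (Or.inr (by simpa using hc)))

theorem hasDerivAt_const_add_ofReal_mul_I (a t : ℝ) :
    HasDerivAt (fun t : ℝ => (a : ℂ) + t * I) I t := by
  simpa using ((ofRealCLM.hasDerivAt (x := t)).mul_const I).const_add (a : ℂ)

theorem integral_inv_vertical_of_pos {a : ℝ} (ha : 0 < a) (c d : ℝ) :
    I • ∫ t in c..d, ((a : ℂ) + t * I)⁻¹ =
      Complex.log (a + d * I) - Complex.log (a + c * I) := by
  rw [← integral_smul]
  simpa [div_eq_mul_inv] using integral_const_div_eq_log_sub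
    (fun t _ => hasDerivAt_const_add_ofReal_mul_I a t)
    (fun t _ => mem_slitPlane_iff.2 (Or.inl (by simpa using ha)))

theorem integral_inv_vertical_of_neg {a : ℝ} (ha : a < 0) (c d : ℝ) :
    I • ∫ t in c..d, ((a : ℂ) + t * I)⁻¹ =
      Complex.log (-(a + d * I)) - Complex.log (-(a + c * I)) := by
  have h := integral_const_div_eq_log_sub (a := c) (b := d)
    (fun t _ => (hasDerivAt_const_add_ofReal_mul_I a t).neg)
    (fun t _ => mem_slitPlane_iff.2 (Or.inl (by simpa using ha)))
  rw [← integral_smul]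
  simpa only [Pi.neg_apply, inv_neg, neg_mul_neg, div_eq_mul_inv, smul_eq_mul] using h

-- A branch of `log` is a primitive of `s⁻¹` on each side: the horizontal sides avoid `ℝ`, the
-- right side lies in `0 < re s`, and on the left side `log (-s)` works. The two mismatches
-- `log u - log (-u) = πi` at the left corners add up to `2πi`.
theorem rectBoundaryIntegral_inv {a b c d : ℝ} (ha : a < 0) (hb : 0 < b) (hc : c < 0)
    (hd : 0 < d) : rectBoundaryIntegral (·⁻¹) a b c d = 2 * π * I := by
  have top := log_sub_log_neg_of_im_pos (u := a + d * I) (by simpa using hd)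
  have bottom := log_sub_log_neg_of_im_pos (u := -(a + c * I)) (by simpa using hc)
  rw [neg_neg] at bottom
  simp only [rectBoundaryIntegral]
  rw [integral_inv_horizontal hc.ne, integral_inv_horizontal hd.ne',
    integral_inv_vertical_of_pos hb, integral_inv_vertical_of_neg ha]
  linear_combination top + bottom

theorem Differentiable.dslope {f : ℂ → ℂ} (hf : Differentiable ℂ f) (c : ℂ) :
    Differentiable ℂ (dslope f c) :=
  differentiableOn_univ.1 ((differentiableOn_dslope univ_mem).2 hf.differentiableOn)

theorem integral_div_eq_integral_dslope_add {f : ℂ → ℂ} (hf : Differentiable ℂ f) {γ : ℝ → ℂ}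
    {a b : ℝ} (hγ : Continuous γ) (hγ0 : ∀ x ∈ [[a, b]], γ x ≠ 0) :
    ∫ x in a..b, f (γ x) / γ x =
      (∫ x in a..b, dslope f 0 (γ x)) + f 0 * ∫ x in a..b, (γ x)⁻¹ := by
  have hg : IntervalIntegrable (fun x => dslope f 0 (γ x)) MeasureTheory.volume a b :=
    ((hf.dslope 0).continuous.comp hγ).intervalIntegrable _ _
  have hinv : IntervalIntegrable (fun x => f 0 * (γ x)⁻¹) MeasureTheory.volume a b :=
    (hγ.continuousOn.inv₀ hγ0).intervalIntegrable.const_mul _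
  rw [← integral_const_mul, ← integral_add hg hinv]
  refine integral_congr fun x hx => ?_
  simp only [dslope_of_ne _ (hγ0 x hx), slope_def_field, sub_zero]
  field_simp [hγ0 x hx]
  ring

theorem ofReal_add_mul_I_ne_zero_of_im {c : ℝ} (hc : c ≠ 0) (x : ℝ) :
    (x : ℂ) + c * I ≠ 0 :=
  fun h => hc (by simpa using congrArg im h)

theorem ofReal_add_mul_I_ne_zero_of_re {a : ℝ} (ha : a ≠ 0) (t : ℝ) :
    (a : ℂ) + t * I ≠ 0 :=
  fun h => ha (by simpa using congrArg re h)

-- Cauchy's formula at `0`: off `0`, `f s / s = dslope f 0 s + f 0 * s⁻¹` with `dslope f 0` entire.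
theorem rectBoundaryIntegral_div_self {f : ℂ → ℂ} (hf : Differentiable ℂ f) {a b c d : ℝ}
    (ha : a < 0) (hb : 0 < b) (hc : c < 0) (hd : 0 < d) :
    rectBoundaryIntegral (fun s => f s / s) a b c d = 2 * π * I * f 0 := by
  have hg := rectBoundaryIntegral_eq_zero_of_differentiableOn (hf.dslope 0).differentiableOn
    (a := a) (b := b) (c := c) (d := d)
  have hinv := rectBoundaryIntegral_inv ha hb hc hd
  simp only [rectBoundaryIntegral, smul_eq_mul] at hg hinv ⊢
  rw [integral_div_eq_integral_dslope_add hf (by fun_prop)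
      (fun x _ => ofReal_add_mul_I_ne_zero_of_im hc.ne x),
    integral_div_eq_integral_dslope_add hf (by fun_prop)
      (fun x _ => ofReal_add_mul_I_ne_zero_of_im hd.ne' x),
    integral_div_eq_integral_dslope_add hf (by fun_prop)
      (fun t _ => ofReal_add_mul_I_ne_zero_of_re hb.ne' t),
    integral_div_eq_integral_dslope_add hf (by fun_prop)
      (fun t _ => ofReal_add_mul_I_ne_zero_of_re ha.ne t)]
  linear_combination hg + f 0 * hinv

theorem integral_exp_mul_real {y : ℝ} (hy : y ≠ 0) (a b : ℝ) :
    ∫ x in a..b, rexp (y * x) = (rexp (y * b) - rexp (y * a)) / y := by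
  apply ofReal_injective
  push_cast [← integral_ofReal]
  exact integral_exp_mul_complex (ofReal_ne_zero.2 hy)

noncomputable def perronKernel (y : ℝ) (s : ℂ) : ℂ := cexp (y * s) / s

noncomputable def perronVerticalIntegral (y a : ℝ) : ℂ :=
  ∫ t in (-1 : ℝ)..1, perronKernel y (a + t * I)

noncomputable def perronHorizontalIntegral (y a b : ℝ) : ℂ :=
  (∫ x in a..b, perronKernel y (x + (-1 : ℝ) * I)) -
    ∫ x in a..b, perronKernel y (x + (1 : ℝ) * I)

theorem rectBoundaryIntegral_perronKernel (y a b : ℝ) :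
    rectBoundaryIntegral (perronKernel y) a b (-1) 1 =
      perronHorizontalIntegral y a b + I * perronVerticalIntegral y b -
        I * perronVerticalIntegral y a := by
  rfl

theorem norm_perronKernel (y : ℝ) (s : ℂ) :
    ‖perronKernel y s‖ = rexp (y * s.re) / ‖s‖ := by
  simp [perronKernel, Complex.norm_exp]

theorem norm_integral_perronKernel_horizontal_le {y : ℝ} (hy : y ≠ 0) {a b c : ℝ}
    (hab : a ≤ b) (hc : 1 ≤ |c|) :
    ‖∫ x in a..b, perronKernel y (x + c * I)‖ ≤ (rexp (y * b) - rexp (y * a)) / y := by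
  rw [← integral_exp_mul_real hy]
  refine norm_integral_le_of_norm_le hab (MeasureTheory.ae_of_all _ fun x _ => ?_)
    (Continuous.intervalIntegrable (by fun_prop) _ _)
  have h1 : 1 ≤ ‖(x : ℂ) + c * I‖ :=
    hc.trans (by simpa using abs_im_le_norm ((x : ℂ) + c * I))
  rw [norm_perronKernel]
  simpa using div_le_self (Real.exp_pos _).le h1

theorem norm_perronHorizontalIntegral_le {y : ℝ} (hy : y ≠ 0) {a b : ℝ} (hab : a ≤ b) :
    ‖perronHorizontalIntegral y a b‖ ≤ 2 * ((rexp (y * b) - rexp (y * a)) / y) := by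
  refine (norm_sub_le _ _).trans ?_
  have bottom := norm_integral_perronKernel_horizontal_le hy hab (c := -1) (by norm_num)
  have top := norm_integral_perronKernel_horizontal_le hy hab (c := 1) (by norm_num)
  linarith

theorem norm_perronVerticalIntegral_le (y : ℝ) {a : ℝ} (ha : a ≠ 0) :
    ‖perronVerticalIntegral y a‖ ≤ 2 * (rexp (y * a) / |a|) := by
  have hbound : ∀ t ∈ Ι (-1 : ℝ) 1, ‖perronKernel y (a + t * I)‖ ≤ rexp (y * a) / |a| := by
    intro t _
    have h1 : |a| ≤ ‖(a : ℂ) + t * I‖ := by simpa using abs_re_le_norm ((a : ℂ) + t * I)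
    rw [norm_perronKernel]
    simpa using div_le_div_of_nonneg_left (Real.exp_pos _).le (abs_pos.2 ha) h1
  have := norm_integral_le_of_norm_le_const hbound
  norm_num at this
  rw [perronVerticalIntegral]
  linarith

theorem I_mul_perronVerticalIntegral_eq_of_pos (y : ℝ) {κ σ : ℝ} (hκ : 0 < κ) (hκσ : κ ≤ σ) :
    I * perronVerticalIntegral y κ =
      perronHorizontalIntegral y κ σ + I * perronVerticalIntegral y σ := by
  have hrect : rectBoundaryIntegral (perronKernel y) κ σ (-1) 1 = 0 := by
    refine rectBoundaryIntegral_eq_zero_of_differentiableOn fun s hs => ?_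
    have hs0 : s ≠ 0 := by
      rintro rfl
      simp [mem_reProdIm, uIcc_of_le hκσ] at hs
      linarith [hs.1]
    exact (((by fun_prop : Differentiable ℂ fun s : ℂ => cexp (y * s)) s).div
      differentiableAt_id hs0).differentiableWithinAt
  rw [rectBoundaryIntegral_perronKernel] at hrect
  linear_combination -hrect

theorem two_pi_I_sub_I_mul_perronVerticalIntegral (y : ℝ) {κ σ : ℝ} (hκ : 0 < κ)
    (hσ : 0 < σ) :
    2 * π * I - I * perronVerticalIntegral y κ =
      perronHorizontalIntegral y (-σ) κ - I * perronVerticalIntegral y (-σ) := by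
  have hrect := rectBoundaryIntegral_div_self (f := fun s => cexp (y * s))
    (by fun_prop : Differentiable ℂ fun s : ℂ => cexp (y * s)) (neg_neg_of_pos hσ) hκ
    (by norm_num : (-1 : ℝ) < 0) one_pos
  change rectBoundaryIntegral (perronKernel y) _ _ _ _ = _ at hrect
  rw [rectBoundaryIntegral_perronKernel] at hrect
  simp only [mul_zero, Complex.exp_zero, mul_one] at hrect
  linear_combination -hrect

theorem norm_v_mul_two_pi_I_sub_le {y κ σ : ℝ} (hy : y ≠ 0) (hκ : 0 < κ) (hκσ : κ ≤ σ) :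
    ‖(v y : ℂ) * (2 * π * I) - I * perronVerticalIntegral y κ‖ ≤
      2 * (rexp (y * κ) / |y| + σ⁻¹) := by
  have hσ : 0 < σ := hκ.trans_le hκσ
  rcases hy.lt_or_gt with hneg | hpos
  · have hH : (rexp (y * σ) - rexp (y * κ)) / y ≤ rexp (y * κ) / |y| := by
      rw [abs_of_neg hneg, ← neg_div_neg_eq, neg_sub]
      exact div_le_div_of_nonneg_right (by linarith [Real.exp_pos (y * σ)]) (by linarith)
    have hV : rexp (y * σ) / |σ| ≤ σ⁻¹ := by
      rw [abs_of_pos hσ, div_eq_mul_inv]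
      exact mul_le_of_le_one_left (inv_nonneg.2 hσ.le)
        (exp_le_one_iff.2 (mul_nonpos_of_nonpos_of_nonneg hneg.le hσ.le))
    rw [v, if_neg hneg.not_ge, ofReal_zero, zero_mul, zero_sub, norm_neg,
      I_mul_perronVerticalIntegral_eq_of_pos y hκ hκσ]
    calc _ ≤ ‖perronHorizontalIntegral y κ σ‖ + ‖perronVerticalIntegral y σ‖ := by
          simpa using norm_add_le _ (I * perronVerticalIntegral y σ)
      _ ≤ _ := by
          linarith [norm_perronHorizontalIntegral_le hy hκσ,
            norm_perronVerticalIntegral_le y hσ.ne']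
  · have hH : (rexp (y * κ) - rexp (y * -σ)) / y ≤ rexp (y * κ) / |y| := by
      rw [abs_of_pos hpos]
      exact div_le_div_of_nonneg_right (by linarith [Real.exp_pos (y * -σ)]) hpos.le
    have hV : rexp (y * -σ) / |-σ| ≤ σ⁻¹ := by
      rw [abs_neg, abs_of_pos hσ, div_eq_mul_inv]
      exact mul_le_of_le_one_left (inv_nonneg.2 hσ.le) (exp_le_one_iff.2 (by nlinarith))
    rw [v, if_pos hpos.le, ofReal_one, one_mul,
      two_pi_I_sub_I_mul_perronVerticalIntegral y hκ hσ]
    calc _ ≤ ‖perronHorizontalIntegral y (-σ) κ‖ + ‖perronVerticalIntegral y (-σ)‖ := by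
          simpa using norm_sub_le _ (I * perronVerticalIntegral y (-σ))
      _ ≤ _ := by
          linarith [norm_perronHorizontalIntegral_le hy (neg_nonpos.2 hσ.le |>.trans hκ.le),
            norm_perronVerticalIntegral_le y (neg_ne_zero.2 hσ.ne')]

theorem norm_sub_one_div_two_pi_I_mul (w z : ℂ) :
    ‖w - 1 / (2 * π * I) * z‖ = ‖w * (2 * π * I) - z‖ / (2 * π) := by
  have hπ : (π : ℂ) ≠ 0 := ofReal_ne_zero.2 pi_ne_zero
  rw [show w - 1 / (2 * π * I) * z = (w * (2 * π * I) - z) / (2 * π * I) by field_simp,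
    norm_div]
  simp [abs_of_pos pi_pos]

theorem integral_exp_div_mul_I_eq (y κ : ℝ) :
    ∫ t in (-1 : ℝ)..1, cexp (y * (κ + I * t)) / (κ + I * t) * I =
      I * perronVerticalIntegral y κ := by
  simp only [integral_mul_const, perronVerticalIntegral, perronKernel, mul_comm I]

theorem perron_kernel_bound_large_y (κ' y : ℝ) (hκ' : 0 < κ') (hy : y ≠ 0) :
    ‖((v y : ℂ) -
        (1 / (2 * (Real.pi : ℂ) * Complex.I)) *
          ∫ t in (-1:ℝ)..1,
            Complex.exp ((y : ℂ) * ((κ' : ℂ) + Complex.I * (t : ℂ))) /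
              ((κ' : ℂ) + Complex.I * (t : ℂ)) * Complex.I)‖ ≤
      Real.exp (y * κ') / (Real.pi * |y|) := by
  rw [integral_exp_div_mul_I_eq, norm_sub_one_div_two_pi_I_mul]
  have hbound : ∀ σ ≥ κ',
      ‖(v y : ℂ) * (2 * π * I) - I * perronVerticalIntegral y κ'‖ / (2 * π) ≤
        rexp (y * κ') / (π * |y|) + (π * σ)⁻¹ := by
    intro σ hσ
    have hσ0 : σ ≠ 0 := (hκ'.trans_le hσ).ne'
    refine (div_le_div_of_nonneg_right (norm_v_mul_two_pi_I_sub_le hy hκ' hσ)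
      (by positivity)).trans_eq ?_
    field_simp
  have hlim : Tendsto (fun σ => rexp (y * κ') / (π * |y|) + (π * σ)⁻¹) atTop
      (𝓝 (rexp (y * κ') / (π * |y|))) := by
    simpa using tendsto_const_nhds.add
      (tendsto_inv_atTop_zero.comp (tendsto_id.const_mul_atTop pi_pos))
  exact ge_of_tendsto hlim ((eventually_ge_atTop κ').mono hbound)
end

section
/- Let v(y) = 1 if y ≥ 0 and v(y) = 0 if y < 0. For every κ' > 0 and every real y, |v(y) - (1/(2πi)) ∫_{κ'-i}^{κ'+i} e^{ys}/s ds| ≤ |v(y) - (e^{yκ'}/π)·arctan(1/κ')| + |y|·e^{yκ'}/π. -/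
/-!
Factoring out `e^{yκ'}`, the integrand `e^{ys}/s` on `s = κ' + it` becomes `e^{yκ'}/s` plus
`e^{yκ'} (e^{iyt} - 1)/s`. The first term integrates to `2i e^{yκ'} arctan(1/κ')` (the imaginary
part of `1/s` is odd in `t`), and the second is at most `|y| e^{yκ'}` in norm pointwise, since
`|e^{iyt} - 1| ≤ |yt| ≤ |y| |s|`.
-/

open Complex Real

lemma ofReal_add_I_mul_ofReal_ne_zero {κ : ℝ} (hκ : κ ≠ 0) (t : ℝ) : (κ : ℂ) + I * t ≠ 0 :=
  fun h => hκ (by simpa using congrArg re h)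

lemma hasDerivAt_arctan_div_sub_log {κ : ℝ} (hκ : κ ≠ 0) (t : ℝ) :
    HasDerivAt (fun t : ℝ => (Real.arctan (t / κ) : ℂ) - I / 2 * (Real.log (κ ^ 2 + t ^ 2) : ℂ))
      (1 / (κ + I * t)) t := by
  have hq : 0 < κ ^ 2 + t ^ 2 := by positivity
  have harctan := (Real.hasDerivAt_arctan (t / κ)).comp t ((hasDerivAt_id t).div_const κ)
  have hlog := (Real.hasDerivAt_log hq.ne').comp t (((hasDerivAt_id t).pow 2).const_add (κ ^ 2))
  refine (harctan.ofReal_comp.sub (hlog.ofReal_comp.const_mul (I / 2))).congr_deriv ?_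
  have hs : (κ : ℂ) + t * I ≠ 0 := mul_comm I (t : ℂ) ▸ ofReal_add_I_mul_ofReal_ne_zero hκ t
  have hqc : (κ : ℂ) ^ 2 + (t : ℂ) ^ 2 ≠ 0 := by exact_mod_cast hq.ne'
  have hκc : (κ : ℂ) ≠ 0 := by exact_mod_cast hκ
  simp only [id]
  push_cast
  field_simp
  linear_combination (-(t : ℂ) ^ 2) * I_sq

lemma integral_one_div_ofReal_add_I_mul_symm {κ : ℝ} (hκ : κ ≠ 0) (T : ℝ) :
    ∫ t in -T..T, 1 / ((κ : ℂ) + I * t) = 2 * Real.arctan (T / κ) := by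
  have hcont : Continuous fun t : ℝ => 1 / ((κ : ℂ) + I * t) :=
    continuous_const.div (by fun_prop) (ofReal_add_I_mul_ofReal_ne_zero hκ)
  rw [intervalIntegral.integral_eq_sub_of_hasDerivAt
    (fun t _ => hasDerivAt_arctan_div_sub_log hκ t) (hcont.intervalIntegrable _ _)]
  simp only [neg_div, Real.arctan_neg, neg_sq]
  push_cast
  ring

lemma norm_exp_I_mul_sub_one_div_le (κ y t : ℝ) :
    ‖(exp (I * ↑(y * t)) - 1) / ((κ : ℂ) + I * t)‖ ≤ |y| := by
  rcases eq_or_ne t 0 with rfl | ht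
  · simp
  have hnum : ‖exp (I * ↑(y * t)) - 1‖ ≤ |y| * |t| :=
    norm_exp_I_mul_ofReal_sub_one_le.trans_eq (by rw [Real.norm_eq_abs, abs_mul])
  have hden : |t| ≤ ‖(κ : ℂ) + I * t‖ := by
    simpa using abs_im_le_norm ((κ : ℂ) + I * t)
  rw [norm_div]
  calc _ ≤ |y| * |t| / |t| := div_le_div₀ (by positivity) hnum (abs_pos.mpr ht) hden
    _ = |y| := mul_div_cancel_right₀ _ (abs_ne_zero.mpr ht)

lemma norm_integral_exp_I_mul_sub_one_div_le (κ y a b : ℝ) :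
    ‖∫ t in a..b, (exp (I * ↑(y * t)) - 1) / ((κ : ℂ) + I * t)‖ ≤ |y| * |b - a| :=
  intervalIntegral.norm_integral_le_of_norm_le_const fun t _ => norm_exp_I_mul_sub_one_div_le κ y t

lemma exp_mul_div_eq (κ y t : ℝ) :
    exp (y * ((κ : ℂ) + I * t)) / ((κ : ℂ) + I * t) =
      Real.exp (y * κ) * (1 / ((κ : ℂ) + I * t) + (exp (I * ↑(y * t)) - 1) / ((κ : ℂ) + I * t)) := by
  have : (y : ℂ) * ((κ : ℂ) + I * t) = ↑(y * κ) + I * ↑(y * t) := by push_cast; ring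
  rw [this, Complex.exp_add, ofReal_exp]
  ring

theorem perron_kernel_bound_small_y (κ' y : ℝ) (hκ' : 0 < κ') :
    ‖(v y : ℂ) -
        (1 / (2 * (Real.pi : ℂ) * Complex.I)) *
          ∫ t in (-1:ℝ)..1,
            Complex.exp ((y : ℂ) * ((κ' : ℂ) + Complex.I * (t : ℂ))) /
              ((κ' : ℂ) + Complex.I * (t : ℂ)) * Complex.I‖ ≤
      |v y - Real.exp (y * κ') / Real.pi * Real.arctan (1 / κ')| +
        |y| * Real.exp (y * κ') / Real.pi := by
  have hs := ofReal_add_I_mul_ofReal_ne_zero hκ'.ne'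
  set E := Real.exp (y * κ')
  set A := E / π * Real.arctan (1 / κ')
  set J := ∫ t in (-1:ℝ)..1, (exp (I * ↑(y * t)) - 1) / ((κ' : ℂ) + I * t)
  have hint : ∫ t in (-1:ℝ)..1, exp (y * ((κ' : ℂ) + I * t)) / ((κ' : ℂ) + I * t) * I =
      E * I * (2 * Real.arctan (1 / κ') + J) := by
    simp_rw [exp_mul_div_eq]
    rw [intervalIntegral.integral_mul_const, intervalIntegral.integral_const_mul,
      intervalIntegral.integral_add, integral_one_div_ofReal_add_I_mul_symm hκ'.ne']
    · ring
    all_goals exact Continuous.intervalIntegrable (by fun_prop (disch := exact hs _)) _ _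
  have hJ : ‖J‖ ≤ 2 * |y| := by
    refine (norm_integral_exp_I_mul_sub_one_div_le κ' y (-1) 1).trans_eq ?_
    norm_num [mul_comm]
  have hsplit : (v y : ℂ) - 1 / (2 * π * I) * (E * I * (2 * Real.arctan (1 / κ') + J)) =
      ((v y - A : ℝ) : ℂ) - ((E / (2 * π) : ℝ) : ℂ) * J := by
    push_cast [A]
    field_simp
    ring
  rw [hint, hsplit]
  calc _ ≤ ‖((v y - A : ℝ) : ℂ)‖ + ‖((E / (2 * π) : ℝ) : ℂ) * J‖ := norm_sub_le _ _
    _ ≤ |v y - A| + E / (2 * π) * (2 * |y|) := by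
      rw [norm_real, Real.norm_eq_abs, norm_mul, norm_real, Real.norm_of_nonneg (by positivity)]
      gcongr
    _ = |v y - A| + |y| * E / π := by ring
end

section
/- For real t ≥ exp(54599), one has 1/(57.54·(log t)^{2/3}·(log log t)^{1/3}) ≥ 1/(R(t)·log t), where R(t) = (J(t) + 0.685 + 0.155·log log t)/(log t·(0.04962 − 0.0196/(J(t)+1.15))) and J(t) = (1/6)·log t + log log t + log(0.63). -/
open Real

set_option maxHeartbeats 1000000

lemma log_54599_bounds : (10.9077708:ℝ) < Real.log 54599 ∧ Real.log 54599 < 10.9077709 := by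
  have hx : |(10937/65536 : ℝ)| < 1 := by rw [abs_of_pos] <;> norm_num
  have h := Real.abs_log_sub_add_sum_range_le hx 9
  rw [abs_of_pos (by norm_num : (0:ℝ) < 10937/65536)] at h
  have h2 : Real.log (1 - 10937/65536 : ℝ) = Real.log 54599 - 16 * Real.log 2 := by
    have e : (1 - 10937/65536 : ℝ) = 54599 / 2^16 := by norm_num
    rw [e, Real.log_div (by norm_num) (by positivity), Real.log_pow]
    push_cast; ring
  rw [h2, abs_le] at h
  simp_rw [Finset.sum_range_succ] at h
  norm_num at h
  have l2l := Real.log_two_gt_d9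
  have l2u := Real.log_two_lt_d9
  constructor <;> nlinarith [h.1, h.2]

lemma log_063_bounds : (-0.4620355:ℝ) < Real.log 0.63 ∧ Real.log 0.63 < -0.4620354 := by
  have hx : |(37/100 : ℝ)| < 1 := by rw [abs_of_pos] <;> norm_num
  have h := Real.abs_log_sub_add_sum_range_le hx 17
  rw [abs_of_pos (by norm_num : (0:ℝ) < 37/100)] at h
  have h2 : Real.log (1 - 37/100 : ℝ) = Real.log 0.63 := by norm_num
  rw [h2, abs_le] at h
  simp_rw [Finset.sum_range_succ] at h
  norm_num at h
  constructor <;> linarith [h.1, h.2]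

lemma cube_root_le {a b : ℝ} (ha : 0 ≤ a) (h : a^3 ≤ b) : a ≤ b^((1:ℝ)/3) := by
  have h1 : (a^(3:ℕ))^((1:ℝ)/3) ≤ b^((1:ℝ)/3) :=
    Real.rpow_le_rpow (by positivity) (by exact_mod_cast h) (by norm_num)
  rwa [← Real.rpow_natCast a 3, ← Real.rpow_mul ha, show ((3:ℕ):ℝ)*(1/3) = 1 by norm_num,
    Real.rpow_one] at h1

lemma sq_cube_le {a b : ℝ} (ha : 0 ≤ a) (hb : 0 ≤ b) (h : a^3 ≤ b^2) : a ≤ b^((2:ℝ)/3) := by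
  have h1 : a ≤ (b^(2:ℕ))^((1:ℝ)/3) := cube_root_le ha (by exact_mod_cast h)
  rwa [← Real.rpow_natCast b 2, ← Real.rpow_mul hb, show ((2:ℕ):ℝ)*(1/3) = 2/3 by norm_num] at h1

/-- Ford's function `J(t) = (1/6)·log t + log log t + log 0.63`. -/
noncomputable def fordJ (t : ℝ) : ℝ :=
  (1 / 6) * Real.log t + Real.log (Real.log t) + Real.log 0.63

/-- Ford's function `R(t)`. -/
noncomputable def fordR (t : ℝ) : ℝ :=
  (fordJ t + 0.685 + 0.155 * Real.log (Real.log t)) /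
    (Real.log t * (0.04962 - 0.0196 / (fordJ t + 1.15)))

theorem vk_beats_classical (t : ℝ) (ht : Real.exp 54599 ≤ t) :
    1 / (fordR t * Real.log t) ≤
      1 / (57.54 * (Real.log t) ^ ((2:ℝ)/3) *
        (Real.log (Real.log t)) ^ ((1:ℝ)/3)) := by
  set L := Real.log t with hLdef
  set l := Real.log L with hldef
  have hL : (54599:ℝ) ≤ L := by
    rw [hLdef, ← Real.log_exp (54599:ℝ)]
    exact Real.log_le_log (Real.exp_pos _) ht
  have hL0 : (0:ℝ) < L := by linarith
  have hlog63 := log_063_bounds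
  have hlog5 := log_54599_bounds
  have hl_lb : (10.9077708:ℝ) ≤ l := by
    rw [hldef]
    calc (10.9077708:ℝ) ≤ Real.log 54599 := hlog5.1.le
      _ ≤ Real.log L := Real.log_le_log (by norm_num) hL
  have hl0 : (0:ℝ) < l := by linarith
  have htan : l ≤ 10.9077709 + (L - 54599)/54599 := by
    have h1 : Real.log (L / 54599) ≤ L/54599 - 1 :=
      Real.log_le_sub_one_of_pos (by positivity)
    have h2 : Real.log (L / 54599) = l - Real.log 54599 := by
      rw [hldef, Real.log_div (by positivity) (by norm_num)]
    rw [h2] at h1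
    have := hlog5.2
    linarith
  set X := L ^ ((2:ℝ)/3) with hXdef
  set Y := l ^ ((1:ℝ)/3) with hYdef
  have hX : (1439.2:ℝ) ≤ X := sq_cube_le (by norm_num) hL0.le (by nlinarith)
  have hY : (2.2177:ℝ) ≤ Y := cube_root_le (by norm_num) (by nlinarith)
  have hXpos : (0:ℝ) < X := by positivity
  have hYpos : (0:ℝ) < Y := by positivity
  have hJ : fordJ t = (1/6)*L + l + Real.log 0.63 := rfl
  set P := fordJ t + 1.15 with hPdef
  have hPeq : P = (1/6)*L + l + Real.log 0.63 + 1.15 := by rw [hPdef, hJ]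
  have hPpos : (0:ℝ) < P := by rw [hPeq]; nlinarith [hlog63.1]
  have hPub : P ≤ (1/6 + 11.5957355/54599) * L := by
    rw [hPeq]
    have := hlog63.2
    nlinarith
  have hdenom : (0:ℝ) < 0.04962 - 0.0196 / P := by
    have hP9 : (9000:ℝ) ≤ P := by rw [hPeq]; nlinarith [hlog63.1]
    have : 0.0196 / P ≤ 0.0196 / 9000 :=
      div_le_div_of_nonneg_left (by norm_num) (by norm_num) hP9
    linarith
  -- AM-GM : X * Y ≤ (2/(3k)) L + (k²/3) l  with  k = 17.1056
  have famgm : X * Y ≤ (2/(3*17.1056))*L + (17.1056^2/3)*l := by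
    have amgm := Real.geom_mean_le_arith_mean2_weighted (by norm_num : (0:ℝ) ≤ 2/3)
      (by norm_num : (0:ℝ) ≤ 1/3) hL0.le
      (by positivity : (0:ℝ) ≤ (17.1056:ℝ)^3 * l) (by norm_num)
    have e1 : ((17.1056:ℝ)^3 * l)^((1:ℝ)/3) = 17.1056 * Y := by
      rw [hYdef, Real.mul_rpow (by positivity) hl0.le, ← Real.rpow_natCast (17.1056:ℝ) 3,
        ← Real.rpow_mul (by norm_num), show ((3:ℕ):ℝ)*(1/3) = 1 by norm_num, Real.rpow_one]
    rw [e1] at amgm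
    have h2 := mul_le_mul_of_nonneg_left amgm (by norm_num : (0:ℝ) ≤ 1/17.1056)
    calc X * Y = (1/17.1056) * (X * (17.1056 * Y)) := by ring
      _ ≤ (1/17.1056) * (2/3*L + 1/3*((17.1056:ℝ)^3 * l)) := h2
      _ = (2/(3*17.1056))*L + (17.1056^2/3)*l := by ring
  -- key inequality
  have hT : (2.8551348:ℝ) * (X*Y) ≤
      ((1/6)*L + l + Real.log 0.63 + 0.685 + 0.155*l) + 57.54*(X*Y)*(0.0196/P) := by
    have hlog63l := hlog63.1
    rcases le_or_gt L 54609 with hc | hc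
    · have hXY : (3191.5:ℝ) ≤ X*Y := by nlinarith
      have hPub2 : P ≤ (1/6 + 11.5957355/54599) * 54609 := by
        have h0 : (0:ℝ) < 1/6 + 11.5957355/54599 := by norm_num
        nlinarith [hPub]
      have hdiv : (3191.5:ℝ) / ((1/6 + 11.5957355/54599) * 54609) ≤ (X*Y)/P :=
        div_le_div₀ (by positivity) hXY hPpos hPub2
      have h2 : (0.3949:ℝ) ≤ 1.127784 * ((3191.5:ℝ) / ((1/6 + 11.5957355/54599) * 54609)) := by
        norm_num
      ring_nf at famgm htan hdiv h2 ⊢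
      linarith
    · have hT0 : (0:ℝ) ≤ 57.54*(X*Y)*(0.0196/P) := by positivity
      ring_nf at famgm htan hT0 ⊢
      linarith
  -- final assembly
  have hrpos : (0:ℝ) < 57.54 * X * Y := by positivity
  apply one_div_le_one_div_of_le hrpos
  have hRL : fordR t * L = (fordJ t + 0.685 + 0.155 * l) / (0.04962 - 0.0196 / P) := by
    rw [fordR, ← hLdef, ← hldef, ← hPdef, div_mul_eq_mul_div,
      mul_comm (fordJ t + 0.685 + 0.155 * l) L, mul_div_mul_left _ _ (ne_of_gt hL0)]
  rw [hRL, le_div_iff₀ hdenom, hJ]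
  ring_nf at hT ⊢
  linarith
end
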